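/- arXiv:2504.11979 — 4 statements merged into one kernel-verified Lean document; each statement's English description precedes it below -/
import Mathlib

section
/- Let β ∈ [0,∞] (with the convention exp(−∞) = 0). Let n₀, f : ℕ → ℕ satisfy n₀(n) → ∞ and f(n)/√(n₀(n)) → β as n → ∞. For each n let λ_n be a random 1-CNF formula with f(n) clauses and n₀(n) variables. Then P(λ_n ∈ SAT) → exp(−(β/2)²) as n → ∞. -/
/-!
A 1-CNF formula is satisfiable iff no variable occurs in it with both signs. A consistent sequence
of `m` literals on `d` distinct variables extends consistently by exactly `2n - d` of the `2n`
literals, so the satisfiability probability `p m` obeys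
`p m * (1 - m/2n) ≤ p (m+1) ≤ p m * (1 - m/2n) + 1/4n`: the error is small because a consistent
sequence with `k = m - d` repeated variables has forced signs on the repeats, a factor `2^-k`.
Hence `p m` lies within `m/4n` above the birthday product `∏_{j<m} (1 - j/2n)`, which equals
`exp (-m(m-1)/4n)` up to `m³/4n²`; for `m ≈ β√n` this tends to `exp (-(β/2)²)`. For `β = ∞`,
`p` is antitone in `m`, so it is eventually below the value for `⌊c√n⌋` clauses, for every `c`.
-/

open Filter Topology
open scoped ENNReal

namespace RandomSAT

/-- Data of a random `k`-clause on `n` variables: a sequence of `k` pairwise distinct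
variables together with `k` signs. -/
def ClauseData (n k : ℕ) : Type :=
  {p : (Fin k → Fin n) × (Fin k → Bool) // Function.Injective p.1}

instance (n k : ℕ) : Fintype (ClauseData n k) := by
  unfold ClauseData; infer_instance

instance (n k : ℕ) : DecidableEq (ClauseData n k) := by
  unfold ClauseData; infer_instance

/-- The `i`-th literal of a clause, as a nonzero integer in `±[n]`
(`σ_i · v_i`, variables being `1,…,n`). -/
def lit {n k : ℕ} (c : ClauseData n k) (i : Fin k) : ℤ :=
  (if c.1.2 i then 1 else -1) * ((c.1.1 i : ℤ) + 1)

/-- Clause satisfaction at an assignment `x : ℤ → Bool` (`true` = 1, `false` = -1):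
some literal of the clause is satisfied, i.e. `σ_i · x_{v_i} = 1` for some `i`. -/
def ClauseSat {n k : ℕ} (c : ClauseData n k) (x : ℤ → Bool) : Prop :=
  ∃ i, x ((c.1.1 i : ℤ) + 1) = c.1.2 i

/-- The set `±[n] = {-n,…,-1,1,…,n}` of literals. -/
noncomputable def pm (n : ℕ) : Finset ℤ := (Finset.Icc (-(n : ℤ)) (n : ℤ)).erase 0

/-- A set of literals is consistent if it contains at most one of `v`, `-v` for each `v`. -/
def Consistent (L : Finset ℤ) : Prop := ∀ l ∈ L, -l ∉ L

/-- `x` fixes the variables dictated by `L`: `x_{|l|} = sgn l` for every `l ∈ L`. -/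
def Fixes (L : Finset ℤ) (x : ℤ → Bool) : Prop :=
  ∀ l ∈ L, x |l| = decide (0 < l)

/-- A `k`-CNF formula with `m` clauses on `n` variables (an outcome of the random formula:
the joint distribution of the i.i.d. uniform clauses is uniform on this space). -/
abbrev CNF (n m k : ℕ) := Fin m → ClauseData n k

/-- `φ(x) = 1`: all clauses are satisfied at `x`. -/
def CNFSat {n m k : ℕ} (φ : CNF n m k) (x : ℤ → Bool) : Prop :=
  ∀ j, ClauseSat (φ j) x

/-- `φ_L ∈ SAT`: some assignment fixing the variables dictated by `L` satisfies `φ`. -/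
def SATFixed {n m k : ℕ} (L : Finset ℤ) (φ : CNF n m k) : Prop :=
  ∃ x, Fixes L x ∧ CNFSat φ x

/-- Probability of an event under the uniform distribution on a finite sample space. -/
noncomputable def prob {Ω : Type*} [Fintype Ω] (A : Set Ω) : ℝ :=
  (Nat.card A : ℝ) / (Fintype.card Ω : ℝ)

open Finset

theorem two_mul_le_two_pow (k : ℕ) : 2 * k ≤ 2 ^ k := by
  cases k with
  | zero => simp
  | succ k => rw [pow_succ]; have := Nat.lt_two_pow_self (n := k); omega

section Consistency

variable {α ι : Type*}

def IsConsistent (φ : ι → α × Bool) : Prop :=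
  ∀ i j, (φ i).1 = (φ j).1 → (φ i).2 = (φ j).2

def Compatible (φ : ι → α × Bool) (c : α × Bool) : Prop :=
  ∀ i, (φ i).1 = c.1 → (φ i).2 = c.2

theorem isConsistent_iff_exists_assignment {φ : ι → α × Bool} :
    IsConsistent φ ↔ ∃ σ : α → Bool, ∀ i, σ (φ i).1 = (φ i).2 := by
  classical
  constructor
  · intro h
    refine ⟨fun a => decide (∃ i, φ i = (a, true)), fun i => ?_⟩
    cases hs : (φ i).2
    · simp only [decide_eq_false_iff_not, not_exists]
      intro j hj
      simpa [hj, hs] using h j i (by rw [hj])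
    · exact decide_eq_true ⟨i, Prod.ext rfl hs⟩
  · rintro ⟨σ, hσ⟩ i j hij
    rw [← hσ i, ← hσ j, hij]

theorem isConsistent_cons {m : ℕ} {φ : Fin m → α × Bool} {c : α × Bool} :
    IsConsistent (Fin.cons c φ : Fin (m + 1) → α × Bool) ↔ IsConsistent φ ∧ Compatible φ c := by
  simp only [IsConsistent, Compatible, Fin.forall_fin_succ, Fin.cons_zero, Fin.cons_succ]
  grind

variable [Fintype ι] [DecidableEq α]

instance (φ : ι → α × Bool) : DecidablePred (Compatible φ) :=
  fun _ => inferInstanceAs (Decidable (∀ _, _))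

instance : DecidablePred (IsConsistent : (ι → α × Bool) → Prop) :=
  fun _ => inferInstanceAs (Decidable (∀ _ _, _))

def vars (φ : ι → α × Bool) : Finset α := univ.image (Prod.fst ∘ φ)

theorem card_vars_le {m : ℕ} (φ : Fin m → α × Bool) : #(vars φ) ≤ m :=
  card_image_le.trans_eq (card_fin m)

theorem card_compatible [Fintype α] {φ : ι → α × Bool} (hφ : IsConsistent φ) :
    #{c | Compatible φ c} = 2 * Fintype.card α - #(vars φ) := by
  have hincompatible : ({c | ¬Compatible φ c} : Finset (α × Bool)) =
      (univ.image φ).image (Prod.map id not) := by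
    ext ⟨a, s⟩
    simp [Compatible, Prod.ext_iff, Bool.eq_not_iff]
  have hvars : #(vars φ) = #(univ.image φ) := by
    rw [vars, ← image_image]
    refine card_image_of_injOn fun p hp q hq hpq => ?_
    simp only [coe_image, coe_univ, Set.image_univ, Set.mem_range] at hp hq
    obtain ⟨i, rfl⟩ := hp
    obtain ⟨j, rfl⟩ := hq
    exact Prod.ext hpq (hφ i j hpq)
  have hsplit := card_filter_add_card_filter_not (s := (univ : Finset (α × Bool)))
    (fun c => Compatible φ c)
  rw [hincompatible, card_image_of_injective _ (Function.injective_id.prodMap Bool.not_injective),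
    card_univ, Fintype.card_prod, Fintype.card_bool] at hsplit
  omega

theorem card_consistent_fiber_le [Fintype α] [DecidableEq ι] (v : ι → α) :
    #{ψ : ι → α × Bool | IsConsistent ψ ∧ Prod.fst ∘ ψ = v} ≤ 2 ^ #(univ.image v) := by
  -- a consistent `ψ` over `v` is determined by the set of variables it makes true
  let trueVars (ψ : ι → α × Bool) : Finset α := {a ∈ univ.image v | ∃ i, ψ i = (a, true)}
  have hsnd {ψ} (hψ : IsConsistent ψ ∧ Prod.fst ∘ ψ = v) (i : ι) :
      (ψ i).2 = true ↔ v i ∈ trueVars ψ := by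
    have hfst (j) : (ψ j).1 = v j := congrFun hψ.2 j
    simp only [trueVars, mem_filter, mem_image_of_mem, true_and, mem_univ]
    refine ⟨fun h => ⟨i, Prod.ext (hfst i) h⟩, fun ⟨j, hj⟩ => ?_⟩
    rw [← hψ.1 j i (by rw [hj, hfst]), hj]
  calc #{ψ : ι → α × Bool | IsConsistent ψ ∧ Prod.fst ∘ ψ = v}
      ≤ #(univ.image v).powerset := by
        refine card_le_card_of_injOn trueVars (fun ψ _ => ?_) fun ψ hψ ψ' hψ' h => ?_
        · exact mem_powerset.2 (filter_subset _ _)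
        · simp only [coe_filter, mem_univ, true_and] at hψ hψ'
          funext i
          refine Prod.ext ((congrFun hψ.2 i).trans (congrFun hψ'.2 i).symm) ?_
          rw [Bool.eq_iff_iff, hsnd hψ, hsnd hψ', h]
    _ = 2 ^ #(univ.image v) := card_powerset _

variable (α) [Fintype α]

def numConsistent (m : ℕ) : ℕ := #{φ : Fin m → α × Bool | IsConsistent φ}

theorem numConsistent_succ (m : ℕ) :
    numConsistent α (m + 1) =
      ∑ ψ : Fin m → α × Bool with IsConsistent ψ, (2 * Fintype.card α - #(vars ψ)) := by
  have hsplit : numConsistent α (m + 1) =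
      #{p : (α × Bool) × (Fin m → α × Bool) | IsConsistent p.2 ∧ Compatible p.2 p.1} := by
    refine card_equiv (Fin.consEquiv fun _ => α × Bool).symm fun φ => ?_
    have h := isConsistent_cons (φ := Fin.tail φ) (c := φ 0)
    rw [Fin.cons_self_tail] at h
    simpa [Fin.consEquiv] using h
  rw [hsplit, card_filter, Fintype.sum_prod_type_right, sum_filter]
  refine sum_congr rfl fun ψ _ => ?_
  split_ifs with hψ
  · rw [← card_compatible hψ, card_filter]
    simp only [hψ, true_and]
  · simp only [hψ, false_and, if_false, sum_const_zero]

theorem two_mul_sum_sub_card_vars_le (m : ℕ) :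
    2 * ∑ ψ : Fin m → α × Bool with IsConsistent ψ, (m - #(vars ψ)) ≤ (2 * Fintype.card α) ^ m := by
  let excess (v : Fin m → α) : ℕ := m - #(univ.image v)
  have hfiber (v : Fin m → α) :
      2 * (#{ψ : Fin m → α × Bool | IsConsistent ψ ∧ Prod.fst ∘ ψ = v} * excess v) ≤ 2 ^ m := by
    have hd : #(univ.image v) ≤ m := card_image_le.trans_eq (card_fin m)
    calc 2 * (#{ψ : Fin m → α × Bool | IsConsistent ψ ∧ Prod.fst ∘ ψ = v} * excess v)
        ≤ 2 ^ #(univ.image v) * (2 * excess v) := by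
          rw [mul_left_comm]; gcongr; exact card_consistent_fiber_le v
      _ ≤ 2 ^ #(univ.image v) * 2 ^ excess v := by gcongr; exact two_mul_le_two_pow _
      _ = 2 ^ m := by rw [← pow_add, Nat.add_sub_cancel' hd]
  calc 2 * ∑ ψ : Fin m → α × Bool with IsConsistent ψ, (m - #(vars ψ))
      = 2 * ∑ ψ : Fin m → α × Bool with IsConsistent ψ, excess (Prod.fst ∘ ψ) := rfl
    _ = ∑ v : Fin m → α, 2 * (#{ψ : Fin m → α × Bool | IsConsistent ψ ∧ Prod.fst ∘ ψ = v} *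
          excess v) := by
        rw [← sum_fiberwise' _ (Prod.fst ∘ ·) excess, mul_sum]
        simp [filter_filter]
    _ ≤ ∑ _v : Fin m → α, 2 ^ m := sum_le_sum fun v _ => hfiber v
    _ = (2 * Fintype.card α) ^ m := by simp [mul_pow, mul_comm]

end Consistency

section SatProb

variable (α : Type*) [Fintype α] [DecidableEq α]

noncomputable def satProb (m : ℕ) : ℝ := numConsistent α m / (2 * Fintype.card α : ℝ) ^ m

theorem satProb_nonneg (m : ℕ) : 0 ≤ satProb α m := by
  unfold satProb; positivity

theorem satProb_zero : satProb α 0 = 1 := by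
  simp [satProb, numConsistent, IsConsistent]

theorem satProb_succ [Nonempty α] (m : ℕ) :
    satProb α (m + 1) = satProb α m * (1 - m / (2 * Fintype.card α)) +
      (∑ ψ : Fin m → α × Bool with IsConsistent ψ, ((m : ℝ) - #(vars ψ))) /
        (2 * Fintype.card α) ^ (m + 1) := by
  have hN : (0 : ℝ) < Fintype.card α := by exact_mod_cast Fintype.card_pos
  have hcast : (numConsistent α (m + 1) : ℝ) =
      ∑ ψ : Fin m → α × Bool with IsConsistent ψ, (2 * Fintype.card α - #(vars ψ) : ℝ) := by
    rw [numConsistent_succ, Nat.cast_sum]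
    refine sum_congr rfl fun ψ _ => ?_
    have : #(vars ψ) ≤ Fintype.card α := card_le_univ _
    rw [Nat.cast_sub (by omega)]
    push_cast; ring
  have hsplit : ∑ ψ : Fin m → α × Bool with IsConsistent ψ, (2 * Fintype.card α - #(vars ψ) : ℝ) =
      numConsistent α m * (2 * Fintype.card α - m) +
        ∑ ψ : Fin m → α × Bool with IsConsistent ψ, ((m : ℝ) - #(vars ψ)) := by
    rw [numConsistent, ← nsmul_eq_mul, ← sum_const, ← sum_add_distrib]
    exact sum_congr rfl fun _ _ => by ring
  rw [satProb, satProb, hcast, hsplit]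
  field_simp
  ring

variable [Nonempty α]

theorem satProb_mul_le_satProb_succ (m : ℕ) :
    satProb α m * (1 - m / (2 * Fintype.card α)) ≤ satProb α (m + 1) := by
  rw [satProb_succ]
  refine le_add_of_nonneg_right (div_nonneg (sum_nonneg fun ψ _ => ?_) (by positivity))
  exact sub_nonneg.2 (by exact_mod_cast card_vars_le ψ)

theorem satProb_succ_le (m : ℕ) : satProb α (m + 1) ≤ satProb α m := by
  have hN : (0 : ℝ) < Fintype.card α := by exact_mod_cast Fintype.card_pos
  have hsum : ∑ ψ : Fin m → α × Bool with IsConsistent ψ, ((m : ℝ) - #(vars ψ)) ≤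
      numConsistent α m * m := by
    rw [numConsistent, ← nsmul_eq_mul, ← sum_const]
    exact sum_le_sum fun ψ _ => sub_le_self _ (Nat.cast_nonneg _)
  calc satProb α (m + 1)
      ≤ satProb α m * (1 - m / (2 * Fintype.card α)) +
          numConsistent α m * m / (2 * Fintype.card α) ^ (m + 1) := by
        rw [satProb_succ]; gcongr
    _ = satProb α m := by rw [satProb]; field_simp; ring

theorem satProb_succ_le_satProb_mul_add (m : ℕ) :
    satProb α (m + 1) ≤
      satProb α m * (1 - m / (2 * Fintype.card α)) + 1 / (4 * Fintype.card α) := by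
  have hN : (0 : ℝ) < Fintype.card α := by exact_mod_cast Fintype.card_pos
  have hsum : ∑ ψ : Fin m → α × Bool with IsConsistent ψ, ((m : ℝ) - #(vars ψ)) ≤
      (2 * Fintype.card α) ^ m / 2 := by
    have h := two_mul_sum_sub_card_vars_le α m
    rw [le_div_iff₀ two_pos]
    calc (∑ ψ : Fin m → α × Bool with IsConsistent ψ, ((m : ℝ) - #(vars ψ))) * 2
        = ((2 * ∑ ψ : Fin m → α × Bool with IsConsistent ψ, (m - #(vars ψ)) : ℕ) : ℝ) := by
          push_cast [Nat.cast_sub (card_vars_le _)]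
          rw [sum_mul, mul_sum]; exact sum_congr rfl fun _ _ => by ring
      _ ≤ (2 * Fintype.card α) ^ m := by exact_mod_cast h
  rw [satProb_succ]
  gcongr _ + ?_
  calc _ ≤ (2 * (Fintype.card α : ℝ)) ^ m / 2 / (2 * Fintype.card α) ^ (m + 1) := by gcongr
    _ = 1 / (4 * Fintype.card α) := by field_simp; ring

theorem satProb_antitone : Antitone (satProb α) :=
  antitone_nat_of_succ_le (satProb_succ_le α)

end SatProb

section ProductBounds

variable {ι : Type*} (s : Finset ι) (x : ι → ℝ)

theorem prod_one_sub_le_exp_neg_sum (h1 : ∀ i ∈ s, x i ≤ 1) :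
    ∏ i ∈ s, (1 - x i) ≤ Real.exp (-∑ i ∈ s, x i) := by
  calc ∏ i ∈ s, (1 - x i) ≤ ∏ i ∈ s, Real.exp (-x i) :=
        prod_le_prod (fun i hi => sub_nonneg.2 (h1 i hi))
          fun i _ => by linarith [Real.add_one_le_exp (-x i)]
    _ = Real.exp (-∑ i ∈ s, x i) := by rw [← Real.exp_sum, sum_neg_distrib]

theorem exp_neg_sum_sub_sum_sq_le_prod_one_sub (h0 : ∀ i ∈ s, 0 ≤ x i) (h1 : ∀ i ∈ s, x i ≤ 1) :
    Real.exp (-∑ i ∈ s, x i) - ∑ i ∈ s, x i ^ 2 ≤ ∏ i ∈ s, (1 - x i) := by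
  induction s using Finset.cons_induction with
  | empty => simp
  | cons a s ha ih =>
    simp only [mem_cons, forall_eq_or_imp] at h0 h1
    rw [prod_cons, sum_cons, sum_cons]
    set S := ∑ i ∈ s, x i
    have hS : 0 ≤ S := sum_nonneg h0.2
    have hE : Real.exp (-S) ≤ 1 := Real.exp_le_one_iff.2 (by linarith)
    have hQ : 0 ≤ ∑ i ∈ s, x i ^ 2 := sum_nonneg fun i _ => sq_nonneg _
    have hx : Real.exp (-x a) ≤ 1 - x a + x a ^ 2 := by
      have := Real.abs_exp_sub_one_sub_id_le (x := -x a)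
        (by rw [abs_neg, abs_le]; constructor <;> linarith)
      rw [neg_sq] at this
      linarith [le_abs_self (Real.exp (-x a) - 1 - -x a)]
    have hprod := mul_le_mul_of_nonneg_left (ih h0.2 h1.2) (sub_nonneg.2 h1.1)
    have hexp := mul_le_mul_of_nonneg_left hx (Real.exp_pos (-S)).le
    rw [neg_add, Real.exp_add]
    -- `(1 - x)(e^{-S} - Q) ≥ e^{-S}(1 - x) - Q ≥ e^{-S} e^{-x} - x² - Q`
    nlinarith [mul_le_mul_of_nonneg_right hE (sq_nonneg (x a)), mul_nonneg h0.1 hQ]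

end ProductBounds

noncomputable def birthdayProb (N m : ℕ) : ℝ := ∏ j ∈ range m, (1 - j / N)

theorem birthdayProb_succ (N m : ℕ) : birthdayProb N (m + 1) = birthdayProb N m * (1 - m / N) :=
  prod_range_succ _ _

theorem sum_range_div (N m : ℕ) : ∑ j ∈ range m, (j / N : ℝ) = m * (m - 1) / (2 * N) := by
  induction m with
  | zero => simp
  | succ m ih => rw [sum_range_succ, ih]; push_cast; field_simp; ring

section Birthday

variable {N m : ℕ}

theorem div_le_one_of_mem_range (hm : m ≤ N + 1) {j : ℕ} (hj : j ∈ range m) : (j / N : ℝ) ≤ 1 :=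
  div_le_one_of_le₀ (by exact_mod_cast (by simp at hj; omega : j ≤ N)) (Nat.cast_nonneg N)

theorem birthdayProb_le_exp (hm : m ≤ N + 1) :
    birthdayProb N m ≤ Real.exp (-(m * (m - 1) / (2 * N))) := by
  rw [← sum_range_div]
  exact prod_one_sub_le_exp_neg_sum _ _ fun j hj => div_le_one_of_mem_range hm hj

theorem exp_sub_le_birthdayProb (hm : m ≤ N + 1) :
    Real.exp (-(m * (m - 1) / (2 * N))) - m ^ 3 / N ^ 2 ≤ birthdayProb N m := by
  have hsq : ∑ j ∈ range m, (j / N : ℝ) ^ 2 ≤ m ^ 3 / N ^ 2 := by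
    calc ∑ j ∈ range m, (j / N : ℝ) ^ 2 ≤ ∑ _j ∈ range m, (m / N : ℝ) ^ 2 :=
          sum_le_sum fun j hj => by gcongr; exact_mod_cast (mem_range.1 hj).le
      _ = m ^ 3 / N ^ 2 := by rw [sum_const, card_range, nsmul_eq_mul]; ring
  rw [← sum_range_div]
  have := exp_neg_sum_sub_sum_sq_le_prod_one_sub (range m) (fun j => (j / N : ℝ))
    (fun j _ => by positivity) fun j hj => div_le_one_of_mem_range hm hj
  exact (sub_le_sub_left hsq _).trans this

end Birthday

section Sandwich

variable (α : Type*) [Fintype α] [DecidableEq α] [Nonempty α] {m : ℕ}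

theorem birthdayProb_le_satProb (hm : m ≤ 2 * Fintype.card α) :
    birthdayProb (2 * Fintype.card α) m ≤ satProb α m := by
  induction m with
  | zero => simp [birthdayProb, satProb_zero]
  | succ m ih =>
    have hx : (m / (2 * Fintype.card α) : ℝ) ≤ 1 :=
      div_le_one_of_le₀ (by exact_mod_cast (by omega : m ≤ 2 * Fintype.card α)) (by positivity)
    rw [birthdayProb_succ]
    push_cast
    calc birthdayProb (2 * Fintype.card α) m * (1 - m / (2 * Fintype.card α))
        ≤ satProb α m * (1 - m / (2 * Fintype.card α)) :=
          mul_le_mul_of_nonneg_right (ih (by omega)) (sub_nonneg.2 hx)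
      _ ≤ satProb α (m + 1) := satProb_mul_le_satProb_succ α m

theorem satProb_le_birthdayProb_add (hm : m ≤ 2 * Fintype.card α) :
    satProb α m ≤ birthdayProb (2 * Fintype.card α) m + m / (4 * Fintype.card α) := by
  induction m with
  | zero => simp [birthdayProb, satProb_zero]
  | succ m ih =>
    have hx : (m / (2 * Fintype.card α) : ℝ) ≤ 1 :=
      div_le_one_of_le₀ (by exact_mod_cast (by omega : m ≤ 2 * Fintype.card α)) (by positivity)
    have hx0 : 0 ≤ (m / (2 * Fintype.card α) : ℝ) := by positivity
    have hy0 : 0 ≤ (m / (4 * Fintype.card α) : ℝ) := by positivity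
    rw [birthdayProb_succ]
    push_cast
    calc satProb α (m + 1)
        ≤ satProb α m * (1 - m / (2 * Fintype.card α)) + 1 / (4 * Fintype.card α) :=
          satProb_succ_le_satProb_mul_add α m
      _ ≤ (birthdayProb (2 * Fintype.card α) m + m / (4 * Fintype.card α)) *
            (1 - m / (2 * Fintype.card α)) + 1 / (4 * Fintype.card α) := by
          have := sub_nonneg.2 hx
          gcongr
          exact ih (by omega)
      _ ≤ birthdayProb (2 * Fintype.card α) m * (1 - m / (2 * Fintype.card α)) +
            (m + 1) / (4 * Fintype.card α) := by
          rw [add_div _ 1]; nlinarith [mul_nonneg hy0 hx0]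

theorem satProb_bounds (hm : m ≤ 2 * Fintype.card α) :
    Real.exp (-(m * (m - 1) / (4 * Fintype.card α))) - m ^ 3 / (4 * Fintype.card α ^ 2) ≤
        satProb α m ∧
      satProb α m ≤
        Real.exp (-(m * (m - 1) / (4 * Fintype.card α))) + m / (4 * Fintype.card α) := by
  have hm' : m ≤ 2 * Fintype.card α + 1 := by omega
  have hlow := exp_sub_le_birthdayProb hm'
  have hup := birthdayProb_le_exp hm'
  push_cast at hlow hup
  rw [show (2 * (2 * Fintype.card α : ℝ)) = 4 * Fintype.card α by ring] at hlow hup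
  rw [show (2 * Fintype.card α : ℝ) ^ 2 = 4 * Fintype.card α ^ 2 by ring] at hlow
  have hsand := satProb_le_birthdayProb_add α hm
  exact ⟨hlow.trans (birthdayProb_le_satProb α hm), by linarith⟩

end Sandwich

section Asymptotics

variable {n m : ℕ → ℕ}

theorem tendsto_satProb (b : ℝ) (hn : Tendsto n atTop atTop)
    (hm : Tendsto (fun k => (m k : ℝ) / √(n k)) atTop (𝓝 b)) :
    Tendsto (fun k => satProb (Fin (n k)) (m k)) atTop (𝓝 (Real.exp (-(b / 2) ^ 2))) := by
  have hsqrt : Tendsto (fun k => (√(n k))⁻¹) atTop (𝓝 0) :=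
    tendsto_inv_atTop_zero.comp (Real.tendsto_sqrt_atTop.comp (tendsto_natCast_atTop_atTop.comp hn))
  have hlin : Tendsto (fun k => (m k : ℝ) / n k) atTop (𝓝 0) := by
    have h := hm.mul hsqrt
    rw [mul_zero] at h
    refine h.congr fun k => ?_
    rw [← div_eq_mul_inv, div_div, Real.mul_self_sqrt (Nat.cast_nonneg _)]
  have hsq : Tendsto (fun k => (m k : ℝ) ^ 2 / n k) atTop (𝓝 (b ^ 2)) :=
    (hm.pow 2).congr fun k => by rw [div_pow, Real.sq_sqrt (Nat.cast_nonneg _)]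
  have hexp : Tendsto (fun k => Real.exp (-(m k * (m k - 1 : ℝ) / (4 * n k)))) atTop
      (𝓝 (Real.exp (-(b / 2) ^ 2))) := by
    have h := ((hsq.sub hlin).div_const 4).neg
    rw [show -((b ^ 2 - 0) / 4) = -(b / 2) ^ 2 by ring] at h
    refine ((Real.continuous_exp.tendsto _).comp h).congr fun k => ?_
    simp only [Function.comp_apply]
    ring_nf
  have hlow : Tendsto (fun k => Real.exp (-(m k * (m k - 1 : ℝ) / (4 * n k))) -
      (m k : ℝ) ^ 3 / (4 * n k ^ 2)) atTop (𝓝 (Real.exp (-(b / 2) ^ 2))) := by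
    refine (hexp.sub ((hsq.mul hlin).div_const 4)).congr (fun k => ?_) |>.trans_eq (by simp)
    ring
  have hup : Tendsto (fun k => Real.exp (-(m k * (m k - 1 : ℝ) / (4 * n k))) +
      (m k : ℝ) / (4 * n k)) atTop (𝓝 (Real.exp (-(b / 2) ^ 2))) := by
    refine (hexp.add (hlin.div_const 4)).congr (fun k => ?_) |>.trans_eq (by simp)
    ring
  have hbounds : ∀ᶠ k in atTop, 1 ≤ n k ∧ m k ≤ 2 * n k := by
    filter_upwards [hn.eventually_ge_atTop 1, hlin.eventually (gt_mem_nhds one_pos)]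
      with k hn1 hmn
    rw [div_lt_one (by positivity)] at hmn
    exact ⟨hn1, by exact_mod_cast (by linarith : (m k : ℝ) ≤ 2 * n k)⟩
  have hsand (k : ℕ) (hk : 1 ≤ n k ∧ m k ≤ 2 * n k) := by
    have : Nonempty (Fin (n k)) := ⟨⟨0, hk.1⟩⟩
    have h := satProb_bounds (Fin (n k)) (m := m k) (by rw [Fintype.card_fin]; exact hk.2)
    rwa [Fintype.card_fin] at h
  exact tendsto_of_tendsto_of_tendsto_of_le_of_le' hlow hup
    (hbounds.mono fun k hk => (hsand k hk).1) (hbounds.mono fun k hk => (hsand k hk).2)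

theorem tendsto_satProb_zero (hn : Tendsto n atTop atTop)
    (hm : Tendsto (fun k => (m k : ℝ) / √(n k)) atTop atTop) :
    Tendsto (fun k => satProb (Fin (n k)) (m k)) atTop (𝓝 0) := by
  refine tendsto_order.2 ⟨fun a ha => .of_forall fun k => ha.trans_le (satProb_nonneg _ _),
    fun ε hε => ?_⟩
  obtain ⟨c, hc0, hc⟩ : ∃ c : ℝ, 0 ≤ c ∧ Real.exp (-(c / 2) ^ 2) < ε := by
    have h : Tendsto (fun c : ℝ => Real.exp (-(c / 2) ^ 2)) atTop (𝓝 0) :=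
      Real.tendsto_exp_atBot.comp (tendsto_neg_atTop_atBot.comp
        ((tendsto_pow_atTop two_ne_zero).comp (tendsto_id.atTop_div_const two_pos)))
    exact ((eventually_ge_atTop 0).and (h.eventually (gt_mem_nhds hε))).exists
  have hfloor : Tendsto (fun k => (⌊c * √(n k)⌋₊ : ℝ) / √(n k)) atTop (𝓝 c) :=
    (tendsto_nat_floor_mul_div_atTop hc0).comp
      (Real.tendsto_sqrt_atTop.comp (tendsto_natCast_atTop_atTop.comp hn))
  filter_upwards [(tendsto_satProb c hn hfloor).eventually (gt_mem_nhds hc),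
    hm.eventually_ge_atTop c, hn.eventually_ge_atTop 1] with k hk hmk hn1
  have : Nonempty (Fin (n k)) := ⟨⟨0, hn1⟩⟩
  have hsqrt : 0 < √(n k : ℝ) := Real.sqrt_pos.2 (by exact_mod_cast hn1)
  refine (satProb_antitone _ (Nat.floor_le_of_le ?_)).trans_lt hk
  exact (le_div_iff₀ hsqrt).1 hmk

end Asymptotics

def clauseEquiv (n : ℕ) : ClauseData n 1 ≃ Fin n × Bool where
  toFun c := (c.1.1 0, c.1.2 0)
  invFun p := ⟨(fun _ => p.1, fun _ => p.2), fun _ _ _ => Subsingleton.elim _ _⟩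
  left_inv c := Subtype.ext <| Prod.ext (funext fun i => by rw [Subsingleton.elim i 0])
    (funext fun i => by rw [Subsingleton.elim i 0])
  right_inv _ := rfl

theorem cnfSat_iff {n m : ℕ} (φ : CNF n m 1) (x : ℤ → Bool) :
    CNFSat φ x ↔ ∀ j, x ((clauseEquiv n (φ j)).1 + 1) = (clauseEquiv n (φ j)).2 := by
  simp only [CNFSat, ClauseSat, Fin.exists_fin_one]
  rfl

theorem exists_cnfSat_iff_isConsistent {n m : ℕ} (φ : CNF n m 1) :
    (∃ x, CNFSat φ x) ↔ IsConsistent (clauseEquiv n ∘ φ) := by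
  simp only [isConsistent_iff_exists_assignment, cnfSat_iff, Function.comp_apply]
  constructor
  · rintro ⟨x, hx⟩
    exact ⟨fun a => x (a + 1), hx⟩
  · rintro ⟨σ, hσ⟩
    have hinj : Function.Injective fun a : Fin n => (a : ℤ) + 1 := fun a b h => by
      simpa [Fin.val_inj] using h
    exact ⟨Function.extend _ σ fun _ => false, fun j => (hinj.extend_apply _ _ _).trans (hσ j)⟩

theorem prob_exists_cnfSat (n m : ℕ) :
    prob {lam : CNF n m 1 | ∃ x, CNFSat lam x} = satProb (Fin n) m := by
  let e : CNF n m 1 ≃ (Fin m → Fin n × Bool) := Equiv.arrowCongr (.refl _) (clauseEquiv n)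
  have hsat : Nat.card {lam : CNF n m 1 | ∃ x, CNFSat lam x} = numConsistent (Fin n) m := by
    rw [Set.coe_ofPred, Nat.card_congr (e.subtypeEquiv exists_cnfSat_iff_isConsistent),
      numConsistent, Nat.card_eq_fintype_card, Fintype.card_subtype]
  have hall : Fintype.card (CNF n m 1) = (2 * n) ^ m := by
    rw [Fintype.card_congr e]; simp [mul_comm]
  rw [prob, satProb, hsat, hall, Fintype.card_fin]
  push_cast; rfl

/-- The random 1-SAT problem. If `n₀(n) → ∞` and `f(n)/√(n₀(n)) → β ∈ [0,∞]`,
then the probability that a random 1-CNF formula with `f n` clauses and `n₀ n` variables is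
satisfiable tends to `exp(−(β/2)²)` (with `exp(−∞) = 0`). -/
theorem random1SAT
    (β : ℝ≥0∞) (n0 f : ℕ → ℕ)
    (hn0 : Tendsto n0 atTop atTop)
    (hβ : Tendsto (fun n => ENNReal.ofReal ((f n : ℝ) / Real.sqrt (n0 n))) atTop (𝓝 β)) :
    Tendsto (fun n => prob {lam : CNF (n0 n) (f n) 1 | ∃ x, CNFSat lam x}) atTop
      (𝓝 (if β = ⊤ then 0 else Real.exp (-(β.toReal / 2) ^ 2))) := by
  simp_rw [prob_exists_cnfSat]
  split_ifs with hβtop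
  · subst hβtop
    exact tendsto_satProb_zero hn0 (ENNReal.tendsto_ofReal_nhds_top.1 hβ)
  · refine tendsto_satProb _ hn0 (((ENNReal.tendsto_toReal hβtop).comp hβ).congr fun k => ?_)
    exact ENNReal.toReal_ofReal (by positivity)

end RandomSAT
end

section
/- Let n, m ∈ ℕ and k₁,…,k_m ∈ ℕ with 1 ≤ k_j ≤ n for each j, and let φ be a random mixed CNF formula with clause lengths (k₁,…,k_m) on n variables. If L, L′ ⊆ ±[n] are consistent sets of literals with |L| ≥ |L′|, then P(φ_L ∈ SAT) ≤ P(φ_{L′} ∈ SAT). -/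
open Filter Topology
open scoped ENNReal

namespace RandomSAT

/-- `φ(x) = 1` for a mixed CNF formula with clause lengths `k j`. -/
def MixedSat {n m : ℕ} {k : Fin m → ℕ} (φ : (j : Fin m) → ClauseData n (k j))
    (x : ℤ → Bool) : Prop :=
  ∀ j, ClauseSat (φ j) x

/-! Fixing the literals `L` amounts to prescribing the values of a partial assignment on the
`|L|` variables occurring in `L`. A signed permutation of the variables (relabel them, then flip
some polarities) acts injectively on clauses of every length and transports satisfying
assignments. Since `|L'| ≤ |L|`, it can be chosen so that every variable fixed by `L'` comes
from a variable fixed by `L`, with polarities matched; it then maps the formulas satisfiable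
under `L` injectively into those satisfiable under `L'`. -/

theorem _root_.Equiv.Perm.exists_mapsTo_of_card_le {α : Type*} {s t : Finset α}
    (h : t.card ≤ s.card) :
    ∃ σ : Equiv.Perm α, Set.MapsTo σ t s := by
  obtain ⟨u, hus, hu⟩ := Finset.exists_subset_card_eq h
  obtain ⟨σ, hσ⟩ := Equiv.Perm.exists_map_finset_eq t u hu.symm
  refine ⟨σ, fun b hb => hus ?_⟩
  rw [← hσ]
  exact Finset.mem_map_of_mem _ hb

variable {n : ℕ}

/-- The name of the variable `a` in `±[n]`, as in `lit` and `ClauseSat`. -/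
def var (a : Fin n) : ℤ := a + 1

@[simp]
lemma var_pos (a : Fin n) : 0 < var a := by
  unfold var; omega

@[simp]
lemma abs_var (a : Fin n) : |var a| = var a :=
  abs_of_pos (var_pos a)

lemma var_injective : Function.Injective (var (n := n)) := by
  intro a b h
  unfold var at h
  omega

lemma exists_var_of_mem_pm {l : ℤ} (hl : l ∈ pm n) :
    ∃ a : Fin n, l = var a ∨ l = -var a := by
  simp only [pm, Finset.mem_erase, Finset.mem_Icc] at hl
  refine ⟨⟨l.natAbs - 1, by omega⟩, ?_⟩
  simp only [var]
  omega

def fixedVars (n : ℕ) (L : Finset ℤ) : Finset (Fin n) := {a | var a ∈ L ∨ -var a ∈ L}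

lemma mem_fixedVars {L : Finset ℤ} {a : Fin n} :
    a ∈ fixedVars n L ↔ var a ∈ L ∨ -var a ∈ L := by
  simp [fixedVars]

lemma card_fixedVars {L : Finset ℤ} (hL : L ⊆ pm n) (hc : Consistent L) :
    (fixedVars n L).card = L.card := by
  classical
  let signedVar : Fin n → ℤ := fun a => if var a ∈ L then var a else -var a
  have signedVar_injective : Function.Injective signedVar := by
    intro a b h
    apply var_injective
    simpa [signedVar, apply_ite abs] using congrArg abs h
  suffices (fixedVars n L).image signedVar = L by
    rw [← Finset.card_image_of_injective (fixedVars n L) signedVar_injective, this]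
  ext l
  simp only [Finset.mem_image, mem_fixedVars, signedVar]
  constructor
  · rintro ⟨a, ha, rfl⟩
    split_ifs with h
    exacts [h, ha.resolve_left h]
  · intro hl
    obtain ⟨a, rfl | rfl⟩ := exists_var_of_mem_pm (hL hl)
    · exact ⟨a, .inl hl, if_pos hl⟩
    · exact ⟨a, .inr hl, if_neg (by simpa using hc _ hl)⟩

lemma fixes_iff {L : Finset ℤ} (hL : L ⊆ pm n) (hc : Consistent L) {x : ℤ → Bool} :
    Fixes L x ↔ ∀ a ∈ fixedVars n L, x (var a) = decide (var a ∈ L) := by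
  have not_mem_of_neg_mem : ∀ a : Fin n, -var a ∈ L → var a ∉ L := fun a h => by
    simpa using hc _ h
  constructor
  · intro hx a ha
    rcases mem_fixedVars.1 ha with h | h
    · simpa [h] using hx _ h
    · simpa [not_mem_of_neg_mem a h, (var_pos a).not_gt] using hx _ h
  · intro hx l hl
    obtain ⟨a, rfl | rfl⟩ := exists_var_of_mem_pm (hL hl)
    · simpa [hl] using hx a (mem_fixedVars.2 (.inl hl))
    · simpa [not_mem_of_neg_mem a hl, (var_pos a).not_gt] using
        hx a (mem_fixedVars.2 (.inr hl))

def ClauseData.SatBy {k : ℕ} (c : ClauseData n k) (y : Fin n → Bool) : Prop :=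
  ∃ i, y (c.1.1 i) = c.1.2 i

def SatExtending {m : ℕ} {k : Fin m → ℕ} (D : Finset (Fin n)) (τ : Fin n → Bool) :
    Set ((j : Fin m) → ClauseData n (k j)) :=
  {φ | ∃ y : Fin n → Bool, (∀ a ∈ D, y a = τ a) ∧ ∀ j, (φ j).SatBy y}

lemma setOf_fixes_mixedSat_eq {m : ℕ} {k : Fin m → ℕ} {L : Finset ℤ} (hL : L ⊆ pm n)
    (hc : Consistent L) :
    {φ : (j : Fin m) → ClauseData n (k j) | ∃ x, Fixes L x ∧ MixedSat φ x} =
      SatExtending (fixedVars n L) (fun a => decide (var a ∈ L)) := by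
  ext φ
  simp only [Set.mem_ofPred_eq, SatExtending, fixes_iff hL hc]
  constructor
  · rintro ⟨x, hx, hsat⟩
    exact ⟨x ∘ var, hx, hsat⟩
  · rintro ⟨y, hy, hsat⟩
    obtain ⟨x, rfl⟩ := var_injective.surjective_comp_right y
    exact ⟨x, hy, hsat⟩

section SignedPerm

variable (E : Equiv.Perm (Fin n)) (s : Fin n → Bool)

def ClauseData.signedPerm {k : ℕ} (c : ClauseData n k) : ClauseData n k :=
  ⟨(E ∘ c.1.1, fun i => xor (s (c.1.1 i)) (c.1.2 i)), E.injective.comp c.2⟩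

lemma ClauseData.signedPerm_injective {k : ℕ} :
    Function.Injective (ClauseData.signedPerm (k := k) E s) := by
  rintro ⟨⟨v, σ⟩, hv⟩ ⟨⟨v', σ'⟩, hv'⟩ h
  obtain ⟨hEv, hσ⟩ := Prod.mk.inj (congrArg Subtype.val h)
  obtain rfl : v = v' := E.injective.comp_left hEv
  obtain rfl : σ = σ' := funext fun i => by simpa [ClauseData.signedPerm] using congrFun hσ i
  rfl

def signedPermAssignment (y : Fin n → Bool) : Fin n → Bool :=
  fun b => xor (s (E.symm b)) (y (E.symm b))

@[simp]
lemma signedPermAssignment_apply_perm (y : Fin n → Bool) (a : Fin n) :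
    signedPermAssignment E s y (E a) = xor (s a) (y a) := by
  simp [signedPermAssignment]

variable {E s}

lemma ClauseData.SatBy.signedPerm {k : ℕ} {c : ClauseData n k} {y : Fin n → Bool}
    (h : c.SatBy y) : (c.signedPerm E s).SatBy (signedPermAssignment E s y) := by
  obtain ⟨i, hi⟩ := h
  exact ⟨i, by simp [ClauseData.signedPerm, hi]⟩

lemma mapsTo_signedPerm_satExtending {m : ℕ} {k : Fin m → ℕ} {D₁ D₂ : Finset (Fin n)}
    {τ₁ τ₂ : Fin n → Bool} (hE : ∀ b ∈ D₂, E.symm b ∈ D₁) :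
    Set.MapsTo (fun φ j => (φ j).signedPerm E (fun a => xor (τ₂ (E a)) (τ₁ a)))
      (SatExtending (k := k) D₁ τ₁) (SatExtending D₂ τ₂) := by
  rintro φ ⟨y, hy, hsat⟩
  refine ⟨signedPermAssignment E _ y, fun b hb => ?_, fun j => (hsat j).signedPerm⟩
  obtain ⟨a, rfl⟩ := E.surjective b
  simp [hy a (by simpa using hE _ hb)]

end SignedPerm

lemma ncard_satExtending_le {m : ℕ} {k : Fin m → ℕ} {D₁ D₂ : Finset (Fin n)}
    (τ₁ τ₂ : Fin n → Bool) (h : D₂.card ≤ D₁.card) :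
    (SatExtending (k := k) D₁ τ₁).ncard ≤ (SatExtending (k := k) D₂ τ₂).ncard := by
  obtain ⟨σ, hσ⟩ := Equiv.Perm.exists_mapsTo_of_card_le h
  refine Set.ncard_le_ncard_of_injOn _
    (mapsTo_signedPerm_satExtending (E := σ.symm) hσ) ?_ (Set.toFinite _)
  exact fun φ _ ψ _ h => funext fun j => ClauseData.signedPerm_injective _ _ (congrFun h j)

lemma prob_le_prob_of_ncard_le {Ω : Type*} [Fintype Ω] {A B : Set Ω} (h : A.ncard ≤ B.ncard) :
    prob A ≤ prob B := by
  unfold prob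
  rw [Nat.card_coe_set_eq, Nat.card_coe_set_eq]
  gcongr

theorem prob_SATFixed_antitone_in_card_general
    (n m : ℕ) (k : Fin m → ℕ)
    (L L' : Finset ℤ) (hLsub : L ⊆ pm n) (hL'sub : L' ⊆ pm n)
    (hLcons : Consistent L) (hL'cons : Consistent L')
    (hcard : L'.card ≤ L.card) :
    prob {φ : (j : Fin m) → ClauseData n (k j) | ∃ x, Fixes L x ∧ MixedSat φ x}
      ≤ prob {φ : (j : Fin m) → ClauseData n (k j) | ∃ x, Fixes L' x ∧ MixedSat φ x} := by
  rw [setOf_fixes_mixedSat_eq hLsub hLcons, setOf_fixes_mixedSat_eq hL'sub hL'cons]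
  apply prob_le_prob_of_ncard_le
  apply ncard_satExtending_le
  rwa [card_fixedVars hLsub hLcons, card_fixedVars hL'sub hL'cons]

/-- For a random mixed CNF formula, fixing more variables can only decrease
the probability of satisfiability. -/
theorem prob_SATFixed_antitone_in_card
    (n m : ℕ) (k : Fin m → ℕ) (hk : ∀ j, 1 ≤ k j ∧ k j ≤ n)
    (L L' : Finset ℤ) (hLsub : L ⊆ pm n) (hL'sub : L' ⊆ pm n)
    (hLcons : Consistent L) (hL'cons : Consistent L')
    (hcard : L'.card ≤ L.card) :
    prob {φ : (j : Fin m) → ClauseData n (k j) | ∃ x, Fixes L x ∧ MixedSat φ x}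
      ≤ prob {φ : (j : Fin m) → ClauseData n (k j) | ∃ x, Fixes L' x ∧ MixedSat φ x} :=
  prob_SATFixed_antitone_in_card_general n m k L L' hLsub hL'sub hLcons hL'cons hcard

end RandomSAT
end

section
/- Let n ≥ 1 and f ≥ 0 be natural numbers, let L₁,…,L_f be i.i.d. random literals uniformly distributed on ±[n], and for v ∈ [n] set N_v = |{j ∈ [f] : |L_j| = v}|. Then P(there is no pair j, j′ ∈ [f] with L_j = −L_{j′}, and N_v ≤ 2 for all v ∈ [n]) = Σ_{k=0}^{⌊f/2⌋} binom(n−k, f−2k)·binom(n, k)·f!/(4^k·n^f). -/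
open Filter Topology
open scoped ENNReal

namespace RandomSAT

/-! Flipping the sign of every repeated occurrence of a variable is an involution on sequences of
literals. It maps the sequences in which no variable occurs with both signs or more than twice
exactly onto the sequences of pairwise distinct literals, of which there are
`(2n)_f = f! · C(2n, f)`. The sum is `C(2n, f)` read off as the coefficient of `X^f` in
`(X + 1)^(2n) = (X^2 + (2X + 1))^n`, where `k` counts the variables contributing `X^2`. -/

open Finset Polynomial

theorem coeff_two_mul_X_add_one_pow (m j : ℕ) :
    ((C 2 * X + 1 : ℕ[X]) ^ m).coeff j = 2 ^ j * m.choose j := by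
  simp only [add_pow, mul_pow, ← C_pow, one_pow, mul_one, finsetSum_coeff, coeff_mul_natCast,
    coeff_C_mul_X_pow]
  rw [Finset.sum_eq_single j]
  · simp
  · intro i _ hij
    simp [Ne.symm hij]
  · intro hj
    rw [mem_range, not_lt] at hj
    simp [Nat.choose_eq_zero_of_lt (Nat.lt_of_succ_le hj)]

theorem choose_two_mul_eq_sum (n f : ℕ) :
    (2 * n).choose f =
      ∑ k ∈ range (f / 2 + 1), n.choose k * (n - k).choose (f - 2 * k) * 2 ^ (f - 2 * k) := by
  have hsq : (X + 1 : ℕ[X]) ^ (2 * n) = (X ^ 2 + (C 2 * X + 1)) ^ n := by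
    rw [pow_mul, C_ofNat]; ring
  have hterm : ∀ k, ((X ^ 2) ^ k * (C 2 * X + 1) ^ (n - k) * (n.choose k : ℕ[X])).coeff f =
      if k ∈ range (f / 2 + 1) then n.choose k * (n - k).choose (f - 2 * k) * 2 ^ (f - 2 * k)
      else 0 := by
    intro k
    simp only [coeff_mul_natCast, Nat.cast_id, ← pow_mul, coeff_X_pow_mul', mem_range,
      coeff_two_mul_X_add_one_pow]
    split_ifs <;> first | omega | ring
  rw [← Nat.cast_id ((2 * n).choose f), ← coeff_X_add_one_pow ℕ, hsq, add_pow, finsetSum_coeff]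
  simp only [hterm, sum_ite_mem]
  refine sum_subset inter_subset_right fun k hk hk' => ?_
  have hnk : n < k := by
    simp only [mem_inter, mem_range] at hk hk'
    omega
  simp [Nat.choose_eq_zero_of_lt hnk]

section FlipRepeats

variable {β : Type*} {f : ℕ}

def SignsAgree (s : Fin f → β × Bool) : Prop :=
  ∀ i j, (s i).1 = (s j).1 → (s i).2 = (s j).2

variable [DecidableEq β]

def OccursAtMostTwice (s : Fin f → β × Bool) : Prop :=
  ∀ b, #{j | (s j).1 = b} ≤ 2

def flipRepeats (s : Fin f → β × Bool) (j : Fin f) : β × Bool :=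
  ((s j).1, xor (s j).2 (decide (∃ i < j, (s i).1 = (s j).1)))

theorem flipRepeats_involutive : Function.Involutive (flipRepeats (β := β) (f := f)) := by
  intro s
  funext j
  exact Prod.ext rfl (Bool.bne_self_right _ _)

theorem occursAtMostTwice_of_injective {s : Fin f → β × Bool} (hs : Function.Injective s) :
    OccursAtMostTwice s := by
  intro b
  calc #{j | (s j).1 = b} ≤ #(univ : Finset Bool) :=
        card_le_card_of_injOn (fun j => (s j).2) (fun _ _ => mem_univ _)
          fun i hi j hj hij => hs (Prod.ext (by simp_all) hij)
    _ = 2 := rfl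

theorem flipRepeats_eq_iff_of_lt {s : Fin f → β × Bool} (hs : OccursAtMostTwice s) {i j : Fin f}
    (hij : i < j) (hv : (s i).1 = (s j).1) :
    flipRepeats s i = flipRepeats s j ↔ (s i).2 ≠ (s j).2 := by
  have hfirst : ¬ ∃ k < i, (s k).1 = (s i).1 := by
    rintro ⟨k, hki, hk⟩
    have : 2 < #{l | (s l).1 = (s i).1} :=
      two_lt_card.2 ⟨k, by simp [hk], i, by simp, j, by simp [hv], hki.ne, (hki.trans hij).ne,
        hij.ne⟩
    exact (hs _).not_gt this
  have hrepeat : ∃ k < j, (s k).1 = (s j).1 := ⟨i, hij, hv⟩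
  rw [flipRepeats, flipRepeats, decide_eq_false hfirst, decide_eq_true hrepeat, hv]
  cases (s i).2 <;> cases (s j).2 <;> simp

theorem injective_flipRepeats_iff (s : Fin f → β × Bool) :
    Function.Injective (flipRepeats s) ↔ SignsAgree s ∧ OccursAtMostTwice s := by
  have hfst : ∀ j, (flipRepeats s j).1 = (s j).1 := fun _ => rfl
  constructor
  · intro hinj
    have hs : OccursAtMostTwice s := by
      simpa only [OccursAtMostTwice, hfst] using occursAtMostTwice_of_injective hinj
    refine ⟨fun i j hv => ?_, hs⟩
    by_contra hσ
    rcases lt_trichotomy i j with hij | rfl | hji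
    · exact hij.ne (hinj ((flipRepeats_eq_iff_of_lt hs hij hv).2 hσ))
    · exact hσ rfl
    · exact hji.ne (hinj ((flipRepeats_eq_iff_of_lt hs hji hv.symm).2 (Ne.symm hσ)))
  · rintro ⟨hσ, hs⟩ i j hflip
    have hv : (s i).1 = (s j).1 := by rw [← hfst, hflip, hfst]
    rcases lt_trichotomy i j with hij | rfl | hji
    · exact absurd (hσ i j hv) ((flipRepeats_eq_iff_of_lt hs hij hv).1 hflip)
    · rfl
    · exact absurd (hσ j i hv.symm) ((flipRepeats_eq_iff_of_lt hs hji hv.symm).1 hflip.symm)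

def signsAgreeEquivEmbedding :
    {s : Fin f → β × Bool // SignsAgree s ∧ OccursAtMostTwice s} ≃ (Fin f ↪ β × Bool) :=
  (flipRepeats_involutive.toPerm _).subtypeEquiv (fun s => (injective_flipRepeats_iff s).symm)
    |>.trans (Equiv.subtypeInjectiveEquivEmbedding _ _)

theorem card_signsAgree_occursAtMostTwice [Fintype β] :
    Nat.card {s : Fin f → β × Bool // SignsAgree s ∧ OccursAtMostTwice s} =
      f.factorial * (2 * Fintype.card β).choose f := by
  rw [Nat.card_congr signsAgreeEquivEmbedding, Nat.card_eq_fintype_card,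
    Fintype.card_embedding_eq, Fintype.card_prod, Fintype.card_fin, Fintype.card_bool,
    mul_comm (Fintype.card β), Nat.descFactorial_eq_factorial_mul_choose]

end FlipRepeats

theorem abs_lit {n k : ℕ} (c : ClauseData n k) (i : Fin k) : |lit c i| = (c.1.1 i : ℤ) + 1 := by
  unfold lit
  split_ifs <;> simp only [one_mul, neg_one_mul, abs_neg] <;> exact abs_of_nonneg (by positivity)

theorem lit_eq_neg_lit_iff {n k : ℕ} (c c' : ClauseData n k) (i i' : Fin k) :
    lit c i = -lit c' i' ↔ c.1.1 i = c'.1.1 i' ∧ c.1.2 i ≠ c'.1.2 i' := by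
  unfold lit
  rw [← Fin.val_inj]
  cases c.1.2 i <;> cases c'.1.2 i' <;> simp <;> omega

def oneClauseEquiv (n : ℕ) : ClauseData n 1 ≃ Fin n × Bool :=
  (Equiv.subtypeUnivEquiv fun _ => Function.injective_of_subsingleton _).trans
    ((Equiv.funUnique (Fin 1) (Fin n)).prodCongr (Equiv.funUnique (Fin 1) Bool))

theorem forall_lit_ne_neg_lit_iff {n f : ℕ} (ω : Fin f → ClauseData n 1) :
    (∀ j j', lit (ω j) 0 ≠ -lit (ω j') 0) ↔ SignsAgree (oneClauseEquiv n ∘ ω) := by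
  simp only [ne_eq, lit_eq_neg_lit_iff, not_and_not_right]
  rfl

theorem forall_card_abs_lit_le_two_iff {n f : ℕ} (ω : Fin f → ClauseData n 1) :
    (∀ v : Fin n, #{j | |lit (ω j) 0| = (v : ℤ) + 1} ≤ 2) ↔
      OccursAtMostTwice (oneClauseEquiv n ∘ ω) := by
  simp only [abs_lit, add_left_inj, Nat.cast_inj, Fin.val_inj]
  rfl

theorem card_lit_consistent_occursAtMostTwice (n f : ℕ) :
    Nat.card {ω : Fin f → ClauseData n 1 //
        (∀ j j', lit (ω j) 0 ≠ -lit (ω j') 0) ∧ ∀ v : Fin n, #{j | |lit (ω j) 0| = v + 1} ≤ 2} =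
      f.factorial * (2 * n).choose f :=
  calc _ = Nat.card {s : Fin f → Fin n × Bool // SignsAgree s ∧ OccursAtMostTwice s} :=
        Nat.card_congr <| (Equiv.arrowCongr (Equiv.refl _) (oneClauseEquiv n)).subtypeEquiv
          fun ω => and_congr (forall_lit_ne_neg_lit_iff ω) (forall_card_abs_lit_le_two_iff ω)
    _ = _ := by rw [card_signsAgree_occursAtMostTwice, Fintype.card_fin]

theorem prob_1SAT_no_triple_general
    (n f : ℕ) :
    prob {ω : Fin f → ClauseData n 1 |
        (∀ j j' : Fin f, lit (ω j) 0 ≠ -(lit (ω j') 0)) ∧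
        (∀ v : Fin n,
          (Finset.univ.filter (fun j => |lit (ω j) 0| = (v : ℤ) + 1)).card ≤ 2)}
    = ∑ k ∈ Finset.range (f / 2 + 1),
        ((n - k).choose (f - 2 * k) : ℝ) * (n.choose k : ℝ) * (f.factorial : ℝ) /
          (4 ^ k * (n : ℝ) ^ f) := by
  have hcard_space : Fintype.card (Fin f → ClauseData n 1) = (2 * n) ^ f := by
    rw [Fintype.card_fun, Fintype.card_congr (oneClauseEquiv n), Fintype.card_prod,
      Fintype.card_fin, Fintype.card_fin, Fintype.card_bool, mul_comm]
  rw [prob, Set.coe_ofPred, card_lit_consistent_occursAtMostTwice, hcard_space,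
    choose_two_mul_eq_sum]
  push_cast
  rw [mul_sum, sum_div]
  refine sum_congr rfl fun k hk => ?_
  have h2k : 2 * k ≤ f := by have := mem_range.1 hk; omega
  have hpow : ((2 : ℝ) * n) ^ f = 4 ^ k * n ^ f * 2 ^ (f - 2 * k) := by
    rw [mul_pow, show (4 : ℝ) = 2 ^ 2 by norm_num, ← pow_mul, mul_right_comm, ← pow_add,
      Nat.add_sub_cancel' h2k]
  rw [hpow, ← mul_assoc, mul_div_mul_right _ _ (pow_ne_zero _ two_ne_zero)]
  ring

/-- Exact probability that `f` i.i.d. uniform random literals on `±[n]` contain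
no contradicting pair and no variable appears more than twice. -/
theorem prob_1SAT_no_triple
    (n f : ℕ) (hn : 1 ≤ n) :
    prob {ω : Fin f → ClauseData n 1 |
        (∀ j j' : Fin f, lit (ω j) 0 ≠ -(lit (ω j') 0)) ∧
        (∀ v : Fin n,
          (Finset.univ.filter (fun j => |lit (ω j) 0| = (v : ℤ) + 1)).card ≤ 2)}
    = ∑ k ∈ Finset.range (f / 2 + 1),
        ((n - k).choose (f - 2 * k) : ℝ) * (n.choose k : ℝ) * (f.factorial : ℝ) /
          (4 ^ k * (n : ℝ) ^ f) :=
  prob_1SAT_no_triple_general n f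

end RandomSAT
end

section
/- Let 0 ≤ α < ∞ and 0 ≤ γ < ∞. Let n₀, m, f : ℕ → ℕ satisfy n₀(n) → ∞, m(n) → ∞, m(n)/n₀(n) → α, f(n) ≤ n₀(n), and f(n)·m(n)^{1/3}/n₀(n) → γ as n → ∞. For each n let L_n ⊆ ±[n₀(n)] be a consistent set of literals with |L_n| = f(n), and let φ_n be a random 3-CNF formula with m(n) clauses and n₀(n) variables, with literals L_{j,1}, L_{j,2}, L_{j,3} in clause j. Then P(for every j ∈ [m(n)], not all three of L_{j,1}, L_{j,2}, L_{j,3} lie in −L_n) → exp(−(γ/2)³) as n → ∞. -/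
open Filter Topology
open scoped ENNReal

namespace RandomSAT

/-!
The clauses are independent, so the probability is `(1 - p)^m` with `p` the probability that a
single clause has all its literals in `-L`. Such a clause is the same thing as an injective sequence
of three elements of `L` (consistency makes the underlying variables distinct), so
`p = (f)₃ / (8 (n₀)₃)`. Up to corrections of order `m^{1/3} / n₀ → 0`, `m (f)₃ / (n₀)₃` is
`(f m^{1/3} / n₀)³ → γ³`, so `m p → (γ/2)³` and `(1 - p)^m → exp (-(γ/2)³)`.
-/

theorem card_clauseData (n k : ℕ) :
    Fintype.card (ClauseData n k) = 2 ^ k * n.descFactorial k := by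
  let e : ClauseData n k ≃ (Fin k ↪ Fin n) × (Fin k → Bool) :=
    { toFun := fun c => (⟨c.1.1, c.2⟩, c.1.2)
      invFun := fun p => ⟨(p.1, p.2), p.1.2⟩
      left_inv := fun _ => rfl
      right_inv := fun _ => rfl }
  simp [Fintype.card_congr e, Fintype.card_embedding_eq, mul_comm]

theorem mem_pm {n : ℕ} {l : ℤ} : l ∈ pm n ↔ l ≠ 0 ∧ l.natAbs ≤ n := by
  simp only [pm, Finset.mem_erase, Finset.mem_Icc]
  omega

theorem Consistent.injOn_natAbs {L : Finset ℤ} (hL : Consistent L) :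
    Set.InjOn Int.natAbs L := by
  intro a ha b hb hab
  rcases Int.natAbs_eq_natAbs_iff.mp hab with h | h
  · exact h
  · exact absurd (by rwa [h, neg_neg]) (hL a ha)

theorem prob_compl {Ω : Type*} [Fintype Ω] [Nonempty Ω] (A : Set Ω) : prob Aᶜ = 1 - prob A := by
  have hsum : (Nat.card A : ℝ) + Nat.card ↥Aᶜ = Fintype.card Ω := by
    rw [Nat.card_coe_set_eq, Nat.card_coe_set_eq, ← Nat.card_eq_fintype_card]
    exact_mod_cast Set.ncard_add_ncard_compl A
  rw [prob, prob, eq_sub_iff_add_eq, ← add_div, add_comm, hsum, div_self (by positivity)]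

theorem prob_pi {α : Type*} [Fintype α] (m : ℕ) (A : Set α) :
    prob {φ : Fin m → α | ∀ j, φ j ∈ A} = prob A ^ m := by
  have hcard : Nat.card {φ : Fin m → α | ∀ j, φ j ∈ A} = Nat.card A ^ m := by
    calc Nat.card {φ : Fin m → α | ∀ j, φ j ∈ A} = Nat.card (Fin m → A) :=
          Nat.card_congr (Equiv.subtypePiEquivPi (p := fun _ => (· ∈ A)))
      _ = Nat.card A ^ m := by rw [Nat.card_fun, Nat.card_fin]
  rw [prob, prob, hcard, Fintype.card_fun, Fintype.card_fin]
  push_cast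
  exact (div_pow _ _ _).symm

section Clause

variable {n k : ℕ} {L : Finset ℤ}

theorem natAbs_lit (c : ClauseData n k) (i : Fin k) : (lit c i).natAbs = c.1.1 i + 1 := by
  unfold lit; split_ifs <;> omega

theorem lit_pos_iff (c : ClauseData n k) (i : Fin k) : 0 < lit c i ↔ c.1.2 i = true := by
  unfold lit; split_ifs with h <;> simp [h]

theorem lit_injective : Function.Injective (lit : ClauseData n k → Fin k → ℤ) := by
  intro c d h
  refine Subtype.ext (Prod.ext (funext fun i => Fin.ext ?_) (funext fun i => ?_))
  · simpa [natAbs_lit] using congrArg Int.natAbs (congrFun h i)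
  · simpa [lit_pos_iff] using congrArg (0 < ·) (congrFun h i)

def ofLits (g : Fin k → ℤ) (hg : ∀ i, g i ∈ pm n)
    (hinj : Function.Injective fun i => (g i).natAbs) : ClauseData n k :=
  ⟨(fun i => ⟨(g i).natAbs - 1, by have := mem_pm.mp (hg i); omega⟩, fun i => decide (0 < g i)),
    fun i j h => hinj <| by
      have := mem_pm.mp (hg i); have := mem_pm.mp (hg j)
      simp only [Fin.mk.injEq] at h
      change (g i).natAbs = (g j).natAbs
      omega⟩

theorem lit_ofLits (g : Fin k → ℤ) (hg : ∀ i, g i ∈ pm n)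
    (hinj : Function.Injective fun i => (g i).natAbs) (i : Fin k) :
    lit (ofLits g hg hinj) i = g i := by
  have := mem_pm.mp (hg i)
  simp only [lit, ofLits, decide_eq_true_eq]
  split_ifs <;> omega

def negLits (c : {c : ClauseData n k // ∀ i, -lit c i ∈ L}) : Fin k ↪ L :=
  ⟨fun i => ⟨-lit c.1 i, c.2 i⟩, fun i j h => c.1.2 <| Fin.ext <| by
    simpa [natAbs_lit] using congrArg (fun l : L => (l : ℤ).natAbs) h⟩

@[simp]
theorem coe_negLits_apply (c : {c : ClauseData n k // ∀ i, -lit c i ∈ L})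
    (i : Fin k) : (negLits c i : ℤ) = -lit c.1 i :=
  rfl

theorem negLits_bijective (hsub : L ⊆ pm n) (hcons : Consistent L) :
    Function.Bijective (negLits : {c : ClauseData n k // ∀ i, -lit c i ∈ L} → (Fin k ↪ L)) := by
  refine ⟨fun c d h => Subtype.ext <| lit_injective <| funext fun i => ?_, fun g => ?_⟩
  · simpa using congrArg Subtype.val (DFunLike.congr_fun h i)
  have hg : ∀ i, -(g i : ℤ) ∈ pm n := fun i => by simpa [mem_pm] using hsub (g i).2
  have hinj : Function.Injective fun i => (-(g i : ℤ)).natAbs := by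
    have : Function.Injective fun i => (g i : ℤ).natAbs :=
      hcons.injOn_natAbs.injective.comp g.injective
    simpa using this
  have hlit := lit_ofLits _ hg hinj
  refine ⟨⟨ofLits _ hg hinj, fun i => by rw [hlit, neg_neg]; exact (g i).2⟩, ?_⟩
  ext i
  simp [hlit]

theorem card_falsified (hsub : L ⊆ pm n) (hcons : Consistent L) :
    Nat.card {c : ClauseData n k // ∀ i, -lit c i ∈ L} = L.card.descFactorial k := by
  rw [Nat.card_congr (Equiv.ofBijective _ (negLits_bijective hsub hcons)),
    Nat.card_eq_fintype_card, Fintype.card_embedding_eq]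
  simp

theorem prob_falsified (hsub : L ⊆ pm n) (hcons : Consistent L) :
    prob {c : ClauseData n k | ∀ i, -lit c i ∈ L} =
      L.card.descFactorial k / (2 ^ k * n.descFactorial k : ℝ) := by
  rw [prob, show Nat.card {c : ClauseData n k | ∀ i, -lit c i ∈ L} = _ from
    card_falsified hsub hcons, card_clauseData]
  push_cast
  rfl

theorem prob_forall_not_falsified (hkn : k ≤ n) (m : ℕ) (hsub : L ⊆ pm n)
    (hcons : Consistent L) :
    prob {φ : CNF n m k | ∀ j, ¬ ∀ i, -lit (φ j) i ∈ L} =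
      (1 - L.card.descFactorial k / (2 ^ k * n.descFactorial k : ℝ)) ^ m := by
  have : Nonempty (ClauseData n k) := Fintype.card_pos_iff.mp <| by
    rw [card_clauseData]
    exact Nat.mul_pos (by positivity) (Nat.pos_of_ne_zero (by simpa using hkn))
  rw [← prob_falsified hsub hcons, ← prob_compl, ← prob_pi]
  rfl

end Clause

theorem tendsto_one_sub_pow_exp {b : ℕ → ℝ} {m : ℕ → ℕ} {c : ℝ} (hm : Tendsto m atTop atTop)
    (hmb : Tendsto (fun n => m n * b n) atTop (𝓝 c)) :
    Tendsto (fun n => (1 - b n) ^ m n) atTop (𝓝 (Real.exp (-c))) := by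
  have hmR : Tendsto (fun n => (m n : ℝ)) atTop atTop := tendsto_natCast_atTop_atTop.comp hm
  have hb : Tendsto b atTop (𝓝 0) := by
    refine (hmb.div_atTop hmR).congr' ?_
    filter_upwards [hm.eventually_ge_atTop 1] with n hn
    field_simp
  have hb1 : ∀ᶠ n in atTop, b n < 1 := hb.eventually_lt_const one_pos
  -- `-b / (1 - b) ≤ log (1 - b) ≤ -b`
  have hlog : Tendsto (fun n => m n * Real.log (1 - b n)) atTop (𝓝 (-c)) := by
    have hlower : Tendsto (fun n => -(m n * b n) / (1 - b n)) atTop (𝓝 (-c)) := by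
      have := hmb.neg.div ((tendsto_const_nhds (x := (1 : ℝ))).sub hb) (by norm_num)
      rwa [sub_zero, div_one] at this
    refine tendsto_of_tendsto_of_tendsto_of_le_of_le' hlower hmb.neg ?_ ?_
    · filter_upwards [hb1] with n hn
      have h := Real.one_sub_inv_le_log_of_pos (sub_pos.mpr hn)
      calc -(m n * b n) / (1 - b n) = m n * (1 - (1 - b n)⁻¹) := by
            field_simp [(sub_pos.mpr hn).ne']; ring
        _ ≤ m n * Real.log (1 - b n) := mul_le_mul_of_nonneg_left h (Nat.cast_nonneg _)
    · filter_upwards [hb1] with n hn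
      have h := Real.log_le_sub_one_of_pos (sub_pos.mpr hn)
      rw [← mul_neg]
      exact mul_le_mul_of_nonneg_left (by linarith) (Nat.cast_nonneg _)
  refine ((Real.continuous_exp.tendsto _).comp hlog).congr' ?_
  filter_upwards [hb1] with n hn
  rw [Function.comp_apply, Real.exp_nat_mul, Real.exp_log (sub_pos.mpr hn)]

theorem _root_.Nat.cast_descFactorial_three {S : Type*} [CommRing S] (a : ℕ) :
    (a.descFactorial 3 : S) = a * (a - 1) * (a - 2) := by
  rcases a with _ | _ | _ | a <;> simp [Nat.descFactorial]
  ring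

theorem tendsto_rpow_third_div {n0 m : ℕ → ℕ} {α : ℝ} (hm : Tendsto m atTop atTop)
    (hmα : Tendsto (fun n => (m n : ℝ) / n0 n) atTop (𝓝 α)) :
    Tendsto (fun n => (m n : ℝ) ^ ((1 : ℝ) / 3) / n0 n) atTop (𝓝 0) := by
  have hmR : Tendsto (fun n => (m n : ℝ)) atTop atTop := tendsto_natCast_atTop_atTop.comp hm
  refine (hmα.div_atTop ((tendsto_rpow_atTop (by norm_num : (0 : ℝ) < 2 / 3)).comp hmR)).congr' ?_
  filter_upwards [hm.eventually_ge_atTop 1] with n hn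
  have hmpos : (0 : ℝ) < m n := by exact_mod_cast hn
  have hsplit : (m n : ℝ) ^ ((1 : ℝ) / 3) * (m n : ℝ) ^ ((2 : ℝ) / 3) = m n := by
    rw [← Real.rpow_add hmpos]; norm_num
  have hdiv : (m n : ℝ) / (m n : ℝ) ^ ((2 : ℝ) / 3) = (m n : ℝ) ^ ((1 : ℝ) / 3) := by
    rw [div_eq_iff (Real.rpow_pos_of_pos hmpos _).ne', hsplit]
  rw [Function.comp_apply, div_right_comm, hdiv]

theorem tendsto_mul_descFactorial_three_div {n0 m f : ℕ → ℕ} {α γ : ℝ}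
    (hn0 : Tendsto n0 atTop atTop) (hm : Tendsto m atTop atTop)
    (hmα : Tendsto (fun n => (m n : ℝ) / n0 n) atTop (𝓝 α))
    (hγ : Tendsto (fun n => (f n : ℝ) * (m n : ℝ) ^ ((1 : ℝ) / 3) / n0 n) atTop (𝓝 γ)) :
    Tendsto (fun n => m n * ((f n).descFactorial 3 / (n0 n).descFactorial 3 : ℝ)) atTop
      (𝓝 (γ ^ 3)) := by
  set x := fun n => (f n : ℝ) * (m n : ℝ) ^ ((1 : ℝ) / 3) / n0 n
  set y := fun n => (m n : ℝ) ^ ((1 : ℝ) / 3) / n0 n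
  set z := fun n => ((n0 n : ℝ))⁻¹
  have hy : Tendsto y atTop (𝓝 0) := tendsto_rpow_third_div hm hmα
  have hz : Tendsto z atTop (𝓝 0) :=
    tendsto_inv_atTop_zero.comp (tendsto_natCast_atTop_atTop.comp hn0)
  have hlim : Tendsto (fun n => x n * (x n - y n) * (x n - 2 * y n) / ((1 - z n) * (1 - 2 * z n)))
      atTop (𝓝 (γ * (γ - 0) * (γ - 2 * 0) / ((1 - 0) * (1 - 2 * 0)))) :=
    ((hγ.mul (hγ.sub hy)).mul (hγ.sub (hy.const_mul 2))).div
      ((tendsto_const_nhds.sub hz).mul (tendsto_const_nhds.sub (hz.const_mul 2))) (by norm_num)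
  rw [show γ * (γ - 0) * (γ - 2 * 0) / ((1 - 0) * (1 - 2 * 0)) = γ ^ 3 by ring] at hlim
  -- `m (f)₃ / (n0)₃ = x (x - y) (x - 2y) / ((1 - z) (1 - 2z))` once `n0 ≥ 3`, as `m = (m^{1/3})³`
  refine hlim.congr' ?_
  filter_upwards [hn0.eventually_ge_atTop 3] with n hn
  have hn' : (3 : ℝ) ≤ n0 n := by exact_mod_cast hn
  have hcube : ((m n : ℝ) ^ ((1 : ℝ) / 3)) ^ 3 = m n := by
    rw [← Real.rpow_natCast, ← Real.rpow_mul (Nat.cast_nonneg _)]; norm_num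
  simp only [x, y, z, Nat.cast_descFactorial_three]
  have h1 : (n0 n : ℝ) - 1 ≠ 0 := by linarith
  have h2 : (n0 n : ℝ) - 2 ≠ 0 := by linarith
  generalize (m n : ℝ) ^ ((1 : ℝ) / 3) = c at hcube ⊢
  rw [← hcube]
  field_simp

theorem prob_no_zero_clause_3CNF_general
    (α γ : ℝ)
    (n0 m f : ℕ → ℕ) (L : (n : ℕ) → Finset ℤ)
    (hn0 : Tendsto n0 atTop atTop)
    (hm : Tendsto m atTop atTop)
    (hmα : Tendsto (fun n => (m n : ℝ) / (n0 n : ℝ)) atTop (𝓝 α))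
    (hγ : Tendsto (fun n => (f n : ℝ) * (m n : ℝ) ^ ((1 : ℝ) / 3) / (n0 n : ℝ))
      atTop (𝓝 γ))
    (hLsub : ∀ n, L n ⊆ pm (n0 n))
    (hLcons : ∀ n, Consistent (L n))
    (hLcard : ∀ n, (L n).card = f n) :
    Tendsto (fun n => prob {φ : CNF (n0 n) (m n) 3 |
        ∀ j, ¬ (∀ i : Fin 3, -(lit (φ j) i) ∈ L n)}) atTop
      (𝓝 (Real.exp (-(γ / 2) ^ 3))) := by
  have hmp : Tendsto (fun n => m n * ((f n).descFactorial 3 / (2 ^ 3 * (n0 n).descFactorial 3) : ℝ))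
      atTop (𝓝 ((γ / 2) ^ 3)) := by
    convert (tendsto_mul_descFactorial_three_div hn0 hm hmα hγ).div_const (2 ^ 3) using 1
    · ext n; ring
    · rw [div_pow]
  refine (tendsto_one_sub_pow_exp hm hmp).congr' ?_
  filter_upwards [hn0.eventually_ge_atTop 3] with n hn
  rw [prob_forall_not_falsified hn _ (hLsub n) (hLcons n), hLcard n]

/-- The probability that no clause of a random 3-CNF formula becomes a 0-clause
when fixing the variables dictated by `L n` tends to `exp(−(γ/2)³)`, where
`f(n)·m(n)^{1/3}/n₀(n) → γ`. -/
theorem prob_no_zero_clause_3CNF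
    (α γ : ℝ) (hα0 : 0 ≤ α) (hγ0 : 0 ≤ γ)
    (n0 m f : ℕ → ℕ) (L : (n : ℕ) → Finset ℤ)
    (hn0 : Tendsto n0 atTop atTop)
    (hm : Tendsto m atTop atTop)
    (hmα : Tendsto (fun n => (m n : ℝ) / (n0 n : ℝ)) atTop (𝓝 α))
    (hfle : ∀ n, f n ≤ n0 n)
    (hγ : Tendsto (fun n => (f n : ℝ) * (m n : ℝ) ^ ((1 : ℝ) / 3) / (n0 n : ℝ))
      atTop (𝓝 γ))
    (hLsub : ∀ n, L n ⊆ pm (n0 n))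
    (hLcons : ∀ n, Consistent (L n))
    (hLcard : ∀ n, (L n).card = f n) :
    Tendsto (fun n => prob {φ : CNF (n0 n) (m n) 3 |
        ∀ j, ¬ (∀ i : Fin 3, -(lit (φ j) i) ∈ L n)}) atTop
      (𝓝 (Real.exp (-(γ / 2) ^ 3))) :=
  prob_no_zero_clause_3CNF_general α γ n0 m f L hn0 hm hmα hγ hLsub hLcons hLcard

end RandomSAT
end
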